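/- arXiv:2002.02157 — 2 statements merged into one kernel-verified Lean document; each statement's English description precedes it below -/
import Mathlib

section
/- For every X ∈ ℝ^{n×2} one has (1 + ‖X‖²)/(2·𝒜(X)) ≤ ‖B(X)‖ ≤ 2·√(1 + ‖X‖²) ≤ 2(1 + ‖X‖). -/
open Matrix BigOperators

noncomputable section

/-- Frobenius inner product of matrices. -/
def frobInner {m k : ℕ} (X Y : Matrix (Fin m) (Fin k) ℝ) : ℝ :=
  ∑ i, ∑ j, X i j * Y i j

/-- Frobenius norm of a matrix. -/
def frobNorm {m k : ℕ} (X : Matrix (Fin m) (Fin k) ℝ) : ℝ :=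
  Real.sqrt (frobInner X X)

/-- The area integrand `𝒜(X) = √(1 + ‖X‖² + det(XᵀX))`. -/
def Area {n : ℕ} (X : Matrix (Fin n) (Fin 2) ℝ) : ℝ :=
  Real.sqrt (1 + frobInner X X + (Xᵀ * X).det)

/-- The symplectic matrix `J = [[0,1],[−1,0]]`. -/
def symJ : Matrix (Fin 2) (Fin 2) ℝ := !![0, 1; -1, 0]

/-- The gradient of a function on matrix space, given by entrywise partial derivatives. -/
def grad {n : ℕ} (f : Matrix (Fin n) (Fin 2) ℝ → ℝ) (X : Matrix (Fin n) (Fin 2) ℝ) :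
    Matrix (Fin n) (Fin 2) ℝ :=
  fun i j => deriv (fun t : ℝ => f (X + t • Matrix.single i j 1)) 0

/-- `A(X) = D𝒜(X)J`. -/
def matA {n : ℕ} (X : Matrix (Fin n) (Fin 2) ℝ) : Matrix (Fin n) (Fin 2) ℝ :=
  grad Area X * symJ

/-- `B(X) = XᵀD𝒜(X)J − 𝒜(X)J`. -/
def matB {n : ℕ} (X : Matrix (Fin n) (Fin 2) ℝ) : Matrix (Fin 2) (Fin 2) ℝ :=
  Xᵀ * grad Area X * symJ - Area X • symJ

/-!
Write `G = XᵀX`. Then `𝒜(X)² = det (1 + G)`, and Jacobi's formula gives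
`D𝒜(X) = X adj(1 + G) / 𝒜(X)`. Since `G adj(1 + G) = det (1 + G) - adj(1 + G)`, this collapses to
`B(X) = -adj(1 + G) J / 𝒜(X)`, so `‖B(X)‖ = ‖1 + G‖ / 𝒜(X)`: right multiplication by `J` and
the adjugate of a `2 × 2` matrix preserve the Frobenius norm. Both bounds are then elementary
inequalities between the entries of the positive semidefinite `2 × 2` matrix `G`, whose trace
is `‖X‖²`.
-/

variable {m k n : ℕ}

lemma frobInner_eq_trace (Y Z : Matrix (Fin m) (Fin k) ℝ) : frobInner Y Z = (Yᵀ * Z).trace := by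
  simp only [frobInner, trace, diag, mul_apply, transpose_apply]
  exact Finset.sum_comm

lemma frobInner_single_one (Y : Matrix (Fin m) (Fin k) ℝ) (i : Fin m) (j : Fin k) :
    frobInner Y (single i j 1) = Y i j := by
  simp [frobInner, single_apply, ite_and]

lemma frobInner_self_nonneg (Y : Matrix (Fin m) (Fin k) ℝ) : 0 ≤ frobInner Y Y :=
  Finset.sum_nonneg fun _ _ => Finset.sum_nonneg fun _ _ => mul_self_nonneg _

lemma frobNorm_sq (Y : Matrix (Fin m) (Fin k) ℝ) : frobNorm Y ^ 2 = frobInner Y Y :=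
  Real.sq_sqrt (frobInner_self_nonneg Y)

lemma frobNorm_smul (c : ℝ) (Y : Matrix (Fin m) (Fin k) ℝ) :
    frobNorm (c • Y) = |c| * frobNorm Y := by
  have hinner : frobInner (c • Y) (c • Y) = c ^ 2 * frobInner Y Y := by
    simp only [frobInner, Matrix.smul_apply, smul_eq_mul, Finset.mul_sum]
    exact Finset.sum_congr rfl fun _ _ => Finset.sum_congr rfl fun _ _ => by ring
  rw [frobNorm, frobNorm, hinner, Real.sqrt_mul (sq_nonneg c), Real.sqrt_sq_eq_abs]

lemma frobNorm_mul_symJ (Y : Matrix (Fin m) (Fin 2) ℝ) : frobNorm (Y * symJ) = frobNorm Y := by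
  have hinner : frobInner (Y * symJ) (Y * symJ) = frobInner Y Y := by
    simp only [frobInner, symJ, mul_apply, of_apply, cons_val', cons_val_fin_one, Fin.sum_univ_two,
      Fin.isValue, cons_val_zero, cons_val_one, mul_zero, mul_neg, mul_one, zero_add, neg_mul,
      neg_neg, add_zero]
    exact Finset.sum_congr rfl fun _ _ => by ring
  rw [frobNorm, frobNorm, hinner]

lemma frobNorm_adjugate_fin_two (M : Matrix (Fin 2) (Fin 2) ℝ) :
    frobNorm (adjugate M) = frobNorm M := by
  have hinner : frobInner (adjugate M) (adjugate M) = frobInner M M := by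
    simp only [frobInner, adjugate_fin_two, Fin.isValue, of_apply, cons_val', cons_val_fin_one,
      Fin.sum_univ_two, cons_val_zero, cons_val_one, mul_neg, neg_mul, neg_neg]
    ring
  rw [frobNorm, frobNorm, hinner]

lemma trace_mul_add_transpose_eq_frobInner {M : Matrix (Fin k) (Fin k) ℝ} (hM : M.IsSymm)
    (X E : Matrix (Fin n) (Fin k) ℝ) :
    (M * (Eᵀ * X + Xᵀ * E)).trace = 2 * frobInner (X * M) E := by
  rw [frobInner_eq_trace, mul_add, trace_add, transpose_mul, hM.eq,
    ← trace_transpose (M * (Eᵀ * X))]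
  simp only [transpose_mul, transpose_transpose, hM.eq, Matrix.mul_assoc]
  rw [← Matrix.mul_assoc, trace_mul_comm (Xᵀ * E) M]
  ring

namespace Matrix

lemma det_one_add_fin_two (G : Matrix (Fin 2) (Fin 2) ℝ) :
    (1 + G).det = 1 + G.trace + G.det := by
  simp only [det_fin_two, trace_fin_two, Fin.isValue, add_apply, one_apply_eq, ne_eq,
    zero_ne_one, one_ne_zero, not_false_eq_true, one_apply_ne, zero_add]
  ring

lemma mul_adjugate_one_add (G : Matrix (Fin k) (Fin k) ℝ) :
    G * adjugate (1 + G) = (1 + G).det • 1 - adjugate (1 + G) := by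
  rw [← mul_adjugate, add_mul, one_mul, add_sub_cancel_left]

lemma PosSemidef.entries_fin_two {G : Matrix (Fin 2) (Fin 2) ℝ} (hG : G.PosSemidef) :
    0 ≤ G 0 0 ∧ 0 ≤ G 1 1 ∧ G 1 0 = G 0 1 ∧ G 0 1 ^ 2 ≤ G 0 0 * G 1 1 := by
  have hsymm : G 1 0 = G 0 1 := by simpa using hG.1.apply 0 1
  have hdet := hG.det_nonneg
  rw [det_fin_two, hsymm] at hdet
  exact ⟨hG.diag_nonneg, hG.diag_nonneg, hsymm, by linarith⟩

lemma posSemidef_transpose_mul_self (Y : Matrix (Fin m) (Fin k) ℝ) :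
    (Yᵀ * Y).PosSemidef := by
  simpa using posSemidef_conjTranspose_mul_self Y

lemma hasDerivAt_det_fin_two {P : ℝ → Matrix (Fin 2) (Fin 2) ℝ} {P' : Matrix (Fin 2) (Fin 2) ℝ}
    {t : ℝ} (h : ∀ i j, HasDerivAt (fun s => P s i j) (P' i j) t) :
    HasDerivAt (fun s => (P s).det) ((adjugate (P t) * P').trace) t := by
  have hdet : (fun s => (P s).det) = fun s => P s 0 0 * P s 1 1 - P s 0 1 * P s 1 0 :=
    funext fun s => det_fin_two (P s)
  rw [hdet]
  refine (((h 0 0).fun_mul (h 1 1)).fun_sub ((h 0 1).fun_mul (h 1 0))).congr_deriv ?_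
  simp only [Fin.isValue, adjugate_fin_two, cons_mul, Nat.succ_eq_add_one, Nat.reduceAdd,
    empty_mul, Equiv.symm_apply_apply, trace_fin_two, of_apply, cons_val', vecMul, dotProduct,
    Fin.sum_univ_two, cons_val_zero, cons_val_one, cons_val_fin_one, neg_mul]
  ring

lemma hasDerivAt_transpose_mul_self_add_smul (X E : Matrix (Fin n) (Fin k) ℝ) (a b : Fin k) :
    HasDerivAt (fun t : ℝ => ((X + t • E)ᵀ * (X + t • E)) a b) ((Eᵀ * X + Xᵀ * E) a b) 0 := by
  simp only [mul_apply, transpose_apply, add_apply, smul_apply, smul_eq_mul,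
    ← Finset.sum_add_distrib]
  refine HasDerivAt.fun_sum fun r _ => ?_
  have hline : ∀ c d : ℝ, HasDerivAt (fun t : ℝ => c + t * d) d 0 := fun c d => by
    simpa using (hasDerivAt_mul_const d).const_add c
  simpa using (hline (X r a) (E r a)).fun_mul (hline (X r b) (E r b))

end Matrix

lemma area_eq_sqrt_det (Y : Matrix (Fin n) (Fin 2) ℝ) : Area Y = √(1 + Yᵀ * Y).det := by
  rw [Area, det_one_add_fin_two, frobInner_eq_trace]

lemma one_le_det_one_add_transpose_mul_self (Y : Matrix (Fin n) (Fin 2) ℝ) :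
    1 ≤ (1 + Yᵀ * Y).det := by
  have hG := posSemidef_transpose_mul_self Y
  rw [det_one_add_fin_two]
  linarith [hG.trace_nonneg, hG.det_nonneg]

lemma area_pos (Y : Matrix (Fin n) (Fin 2) ℝ) : 0 < Area Y := by
  rw [area_eq_sqrt_det]
  exact Real.sqrt_pos.2 (one_pos.trans_le (one_le_det_one_add_transpose_mul_self Y))

lemma area_sq (Y : Matrix (Fin n) (Fin 2) ℝ) : Area Y ^ 2 = (1 + Yᵀ * Y).det := by
  rw [area_eq_sqrt_det, Real.sq_sqrt (zero_le_one.trans (one_le_det_one_add_transpose_mul_self Y))]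

lemma hasDerivAt_area_add_smul (X E : Matrix (Fin n) (Fin 2) ℝ) :
    HasDerivAt (fun t : ℝ => Area (X + t • E))
      (frobInner (X * adjugate (1 + Xᵀ * X)) E / Area X) 0 := by
  have hdet : HasDerivAt (fun t : ℝ => (1 + (X + t • E)ᵀ * (X + t • E)).det)
      ((adjugate (1 + Xᵀ * X) * (Eᵀ * X + Xᵀ * E)).trace) 0 := by
    simpa using hasDerivAt_det_fin_two (P := fun t : ℝ => 1 + (X + t • E)ᵀ * (X + t • E)) (t := 0)
      fun i j => (hasDerivAt_transpose_mul_self_add_smul X E i j).const_add ((1 : Matrix _ _ ℝ) i j)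
  have hsymm : (adjugate (1 + Xᵀ * X)).IsSymm :=
    IsSymm.adjugate (by simp [IsSymm, transpose_add, transpose_mul])
  simp_rw [area_eq_sqrt_det]
  refine (hdet.sqrt ?_).congr_deriv ?_
  · simpa using (one_pos.trans_le (one_le_det_one_add_transpose_mul_self X)).ne'
  rw [trace_mul_add_transpose_eq_frobInner hsymm]
  simp only [zero_smul, add_zero]
  ring

lemma grad_area (X : Matrix (Fin n) (Fin 2) ℝ) :
    grad Area X = (Area X)⁻¹ • (X * adjugate (1 + Xᵀ * X)) := by
  ext i j
  rw [grad, (hasDerivAt_area_add_smul X (single i j 1)).deriv, frobInner_single_one,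
    Matrix.smul_apply, smul_eq_mul, div_eq_inv_mul]

lemma matB_eq (X : Matrix (Fin n) (Fin 2) ℝ) :
    matB X = -(Area X)⁻¹ • (adjugate (1 + Xᵀ * X) * symJ) := by
  have hA := (area_pos X).ne'
  calc matB X = (Area X)⁻¹ • (Xᵀ * X * adjugate (1 + Xᵀ * X) * symJ) - Area X • symJ := by
        rw [matB, grad_area, Matrix.mul_smul, smul_mul, ← Matrix.mul_assoc]
    _ = (Area X)⁻¹ • (Area X ^ 2 • symJ - adjugate (1 + Xᵀ * X) * symJ) - Area X • symJ := by
        rw [mul_adjugate_one_add, ← area_sq, sub_mul, smul_mul, one_mul]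
    _ = -(Area X)⁻¹ • (adjugate (1 + Xᵀ * X) * symJ) := by
        rw [smul_sub, smul_smul, show (Area X)⁻¹ * Area X ^ 2 = Area X by field_simp]
        module

lemma frobNorm_matB (X : Matrix (Fin n) (Fin 2) ℝ) :
    frobNorm (matB X) = frobNorm (1 + Xᵀ * X) / Area X := by
  rw [matB_eq, frobNorm_smul, frobNorm_mul_symJ, frobNorm_adjugate_fin_two, abs_neg, abs_inv,
    abs_of_pos (area_pos X), inv_mul_eq_div]

lemma one_add_trace_le_two_mul_frobNorm {G : Matrix (Fin 2) (Fin 2) ℝ} (hG : G.PosSemidef) :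
    1 + G.trace ≤ 2 * frobNorm (1 + G) := by
  obtain ⟨ha, hc, hb, -⟩ := hG.entries_fin_two
  have hsq : (1 + G.trace) ^ 2 ≤ (2 * frobNorm (1 + G)) ^ 2 := by
    rw [mul_pow, frobNorm_sq]
    simp only [trace_fin_two, Fin.isValue, frobInner, Matrix.add_apply, Fin.sum_univ_two,
      one_apply_eq, ne_eq, zero_ne_one, not_false_eq_true, one_apply_ne, zero_add, one_ne_zero, hb]
    nlinarith [sq_nonneg (G 0 0 - G 1 1), sq_nonneg (G 0 1)]
  exact (pow_le_pow_iff_left₀ (by linarith [hG.trace_nonneg])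
    (mul_nonneg zero_le_two (Real.sqrt_nonneg _)) two_ne_zero).1 hsq

lemma frobNorm_one_add_le {G : Matrix (Fin 2) (Fin 2) ℝ} (hG : G.PosSemidef) :
    frobNorm (1 + G) ≤ 2 * √(1 + G).det * √(1 + G.trace) := by
  obtain ⟨ha, hc, hb, hbac⟩ := hG.entries_fin_two
  have hdet : 0 ≤ (1 + G).det := by
    rw [det_one_add_fin_two]
    linarith [hG.trace_nonneg, hG.det_nonneg]
  rw [frobNorm, Real.sqrt_le_left (by positivity), mul_pow, mul_pow, Real.sq_sqrt hdet,
    Real.sq_sqrt (by linarith [hG.trace_nonneg])]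
  simp only [frobInner, Matrix.add_apply, Fin.sum_univ_two, Fin.isValue, one_apply_eq, ne_eq,
    zero_ne_one, not_false_eq_true, one_apply_ne, zero_add, one_ne_zero, hb, det_fin_two,
    trace_fin_two]
  nlinarith [mul_nonneg ha hc, mul_nonneg (mul_nonneg ha hc) (add_nonneg ha hc),
    mul_nonneg (sub_nonneg.2 hbac) (add_nonneg ha hc), sq_nonneg (G 0 1)]

theorem norm_matB_bounds_general {n : ℕ} (X : Matrix (Fin n) (Fin 2) ℝ) :
    (1 + frobNorm X ^ 2) / (2 * Area X) ≤ frobNorm (matB X) ∧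
      frobNorm (matB X) ≤ 2 * Real.sqrt (1 + frobNorm X ^ 2) ∧
      2 * Real.sqrt (1 + frobNorm X ^ 2) ≤ 2 * (1 + frobNorm X) := by
  have hG := posSemidef_transpose_mul_self X
  have hA := area_pos X
  have hX : frobNorm X ^ 2 = (Xᵀ * X).trace := by rw [frobNorm_sq, frobInner_eq_trace]
  refine ⟨?_, ?_, ?_⟩
  · rw [frobNorm_matB, hX, ← div_div]
    exact div_le_div_of_nonneg_right (by linarith [one_add_trace_le_two_mul_frobNorm hG]) hA.le
  · rw [frobNorm_matB, hX, div_le_iff₀ hA, area_eq_sqrt_det]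
    linarith [frobNorm_one_add_le hG]
  · have hXn : 0 ≤ frobNorm X := Real.sqrt_nonneg _
    gcongr
    exact Real.sqrt_le_iff.2 ⟨by positivity, by nlinarith⟩

/-- For every `X ∈ ℝ^{n×2}`:
`(1 + ‖X‖²)/(2·𝒜(X)) ≤ ‖B(X)‖ ≤ 2·√(1 + ‖X‖²) ≤ 2(1 + ‖X‖)`. -/
theorem norm_matB_bounds {n : ℕ} (hn : 1 ≤ n) (X : Matrix (Fin n) (Fin 2) ℝ) :
    (1 + frobNorm X ^ 2) / (2 * Area X) ≤ frobNorm (matB X) ∧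
      frobNorm (matB X) ≤ 2 * Real.sqrt (1 + frobNorm X ^ 2) ∧
      2 * Real.sqrt (1 + frobNorm X ^ 2) ≤ 2 * (1 + frobNorm X) :=
  norm_matB_bounds_general X

end
end

section
/- For every R > 0 there exist ε'(R) > 0 and τ' = τ'(R) > 0 such that: if f : ℝ^{n×2} → ℝ is of class C² and ‖f − 𝒜‖_{C²(B_{2R})} ≤ ε'(R), then D²f(X)[Y,Y] ≥ τ'·‖Y‖² for all X, Y ∈ ℝ^{n×2} with ‖X‖ ≤ 3R/2 and rank(Y) = 1. -/
open Matrix BigOperators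

noncomputable section

/-- `D²f(X)[Y,Y]`: the second derivative at `t = 0` of `t ↦ f(X + tY)`. -/
def hess {n : ℕ} (f : Matrix (Fin n) (Fin 2) ℝ → ℝ)
    (X Y : Matrix (Fin n) (Fin 2) ℝ) : ℝ :=
  iteratedDeriv 2 (fun t : ℝ => f (X + t • Y)) 0

attribute [local instance] Matrix.frobeniusNormedAddCommGroup Matrix.frobeniusNormedSpace

/-!
For rank-one `Y = u vᵀ` the columns of `X + tY` are `xⱼ + t vⱼ u`, so the Gram determinant of the
columns (the squared norm of their wedge) is quadratic in `t`, not quartic. Hence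
`𝒜(X + tY)² = q(t) = At² + Bt + C` with `q ≥ 1`, `C = 𝒜(X)²` and `A ≥ ‖Y‖²` (Cauchy–Schwarz).
Since `q - 1 ≥ 0` has nonpositive discriminant, `(√q)''(0) = (4AC - B²)/(4C^{3/2}) ≥ A/C^{3/2}`,
so `D²𝒜(X)[Y,Y] ≥ ‖Y‖²/𝒜(X)³ ≥ ‖Y‖²/(1 + ‖X‖²)³`. A perturbation whose second derivatives are
within half of this constant keeps the other half; homogeneity of `D²f(X)[Y,Y]` in `Y` reduces to
`‖Y‖ = 1`.
-/

lemma frobNorm_eq_norm {m k : ℕ} (X : Matrix (Fin m) (Fin k) ℝ) : frobNorm X = ‖X‖ := by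
  rw [frobNorm, frobInner, Matrix.frobenius_norm_def, Real.sqrt_eq_rpow]
  simp [← sq]

section DotProduct

variable {ι R : Type*} [Fintype ι] [CommRing R] [LinearOrder R] [IsStrictOrderedRing R]

lemma dotProduct_self_nonneg (a : ι → R) : 0 ≤ a ⬝ᵥ a :=
  Finset.sum_nonneg fun i _ => mul_self_nonneg (a i)

lemma dotProduct_sq_le (a b : ι → R) :
    (a ⬝ᵥ b) ^ 2 ≤ (a ⬝ᵥ a) * (b ⬝ᵥ b) := by
  simpa [dotProduct, sq] using Finset.sum_mul_sq_le_sq_mul_sq Finset.univ a b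

end DotProduct

lemma frobInner_self_eq_dotProduct {n : ℕ} (W : Matrix (Fin n) (Fin 2) ℝ) :
    frobInner W W = Wᵀ 0 ⬝ᵥ Wᵀ 0 + Wᵀ 1 ⬝ᵥ Wᵀ 1 := by
  simp [frobInner, dotProduct, Fin.sum_univ_two, Finset.sum_add_distrib]

lemma norm_sq_eq_dotProduct {n : ℕ} (W : Matrix (Fin n) (Fin 2) ℝ) :
    ‖W‖ ^ 2 = Wᵀ 0 ⬝ᵥ Wᵀ 0 + Wᵀ 1 ⬝ᵥ Wᵀ 1 := by
  rw [← frobNorm_eq_norm, frobNorm, frobInner_self_eq_dotProduct,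
    Real.sq_sqrt (add_nonneg (dotProduct_self_nonneg _) (dotProduct_self_nonneg _))]

/-- `1 + ‖W‖² + det(WᵀW)` for the matrix `W` with columns `a`, `b`. -/
def areaForm {ι : Type*} [Fintype ι] (a b : ι → ℝ) : ℝ :=
  1 + a ⬝ᵥ a + b ⬝ᵥ b + (a ⬝ᵥ a) * (b ⬝ᵥ b) - (a ⬝ᵥ b) ^ 2

lemma one_le_areaForm {ι : Type*} [Fintype ι] (a b : ι → ℝ) : 1 ≤ areaForm a b := by
  have := dotProduct_sq_le a b
  have := dotProduct_self_nonneg a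
  have := dotProduct_self_nonneg b
  unfold areaForm
  linarith

lemma areaForm_add_smul_eq_quadratic {ι : Type*} [Fintype ι] (x y u : ι → ℝ) (v₀ v₁ : ℝ) :
    ∃ A B : ℝ, (v₀ ^ 2 + v₁ ^ 2) * (u ⬝ᵥ u) ≤ A ∧ ∀ t : ℝ,
      areaForm (x + (t * v₀) • u) (y + (t * v₁) • u) = A * t ^ 2 + B * t + areaForm x y := by
  set c := v₁ • x - v₀ • y
  refine ⟨(v₀ ^ 2 + v₁ ^ 2) * (u ⬝ᵥ u) + ((u ⬝ᵥ u) * (c ⬝ᵥ c) - (u ⬝ᵥ c) ^ 2),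
    2 * (v₀ * (x ⬝ᵥ u) + v₁ * (y ⬝ᵥ u) + (x ⬝ᵥ x) * v₁ * (y ⬝ᵥ u)
      + (y ⬝ᵥ y) * v₀ * (x ⬝ᵥ u) - (x ⬝ᵥ y) * (v₁ * (x ⬝ᵥ u) + v₀ * (y ⬝ᵥ u))), ?_, fun t => ?_⟩
  · linarith [dotProduct_sq_le u c]
  · simp only [areaForm, c, add_dotProduct, dotProduct_add, sub_dotProduct, dotProduct_sub,
      smul_dotProduct, dotProduct_smul, smul_eq_mul, dotProduct_comm u x, dotProduct_comm u y,
      dotProduct_comm y x]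
    ring

lemma areaForm_le_sq {ι : Type*} [Fintype ι] (a b : ι → ℝ) :
    areaForm a b ≤ (1 + (a ⬝ᵥ a + b ⬝ᵥ b)) ^ 2 := by
  have := dotProduct_self_nonneg a
  have := dotProduct_self_nonneg b
  unfold areaForm
  nlinarith [sq_nonneg (a ⬝ᵥ b)]

lemma Area_eq_sqrt_areaForm {n : ℕ} (W : Matrix (Fin n) (Fin 2) ℝ) :
    Area W = √(areaForm (Wᵀ 0) (Wᵀ 1)) := by
  have gram : ∀ a b, (Wᵀ * W) a b = Wᵀ a ⬝ᵥ Wᵀ b := fun _ _ => rfl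
  rw [Area, Matrix.det_fin_two, gram, gram, gram, gram, dotProduct_comm (Wᵀ 1) (Wᵀ 0),
    frobInner_self_eq_dotProduct, areaForm]
  ring_nf

lemma one_le_Area {n : ℕ} (X : Matrix (Fin n) (Fin 2) ℝ) : 1 ≤ Area X := by
  rw [Area_eq_sqrt_areaForm, Real.one_le_sqrt]
  exact one_le_areaForm _ _

lemma Area_le_one_add_norm_sq {n : ℕ} (X : Matrix (Fin n) (Fin 2) ℝ) :
    Area X ≤ 1 + ‖X‖ ^ 2 := by
  rw [Area_eq_sqrt_areaForm, norm_sq_eq_dotProduct]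
  refine Real.sqrt_le_iff.mpr ⟨?_, areaForm_le_sq _ _⟩
  linarith [dotProduct_self_nonneg (Xᵀ 0), dotProduct_self_nonneg (Xᵀ 1)]

lemma iteratedDeriv_two_sqrt_quadratic {A B C : ℝ} (hq : ∀ t : ℝ, 0 < A * t ^ 2 + B * t + C) :
    iteratedDeriv 2 (fun t => √(A * t ^ 2 + B * t + C)) 0
      = (4 * A * C - B ^ 2) / (4 * C * √C) := by
  have hC : 0 < C := by simpa using hq 0
  have hq' : ∀ t, HasDerivAt (fun t => A * t ^ 2 + B * t + C) (2 * A * t + B) t := fun t => by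
    simpa [mul_comm, mul_assoc, mul_left_comm] using
      (((hasDerivAt_pow 2 t).const_mul A).add ((hasDerivAt_id t).const_mul B)).add_const C
  have hg' : ∀ t, HasDerivAt (fun t => √(A * t ^ 2 + B * t + C))
      ((2 * A * t + B) / (2 * √(A * t ^ 2 + B * t + C))) t :=
    fun t => (hq' t).sqrt (hq t).ne'
  have hg'' := ((hasDerivAt_id' (x := (0 : ℝ))).const_mul (2 * A) |>.add_const B).fun_div
    ((hg' 0).const_mul 2) (by simp [Real.sqrt_eq_zero', hC])
  rw [iteratedDeriv_succ, iteratedDeriv_one, funext fun t => (hg' t).deriv, hg''.deriv]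
  have hsC : √C * √C = C := Real.mul_self_sqrt hC.le
  simp only [mul_zero, zero_add, ne_eq, OfNat.ofNat_ne_zero, not_false_eq_true,
    zero_pow, add_zero]
  field_simp
  linear_combination (4 * B ^ 2) * hsC

lemma le_iteratedDeriv_two_sqrt_quadratic {A B C : ℝ} (hq : ∀ t : ℝ, 1 ≤ A * t ^ 2 + B * t + C) :
    A / (C * √C) ≤ iteratedDeriv 2 (fun t => √(A * t ^ 2 + B * t + C)) 0 := by
  have hC : 0 < C := by linarith [hq 0]
  rw [iteratedDeriv_two_sqrt_quadratic fun t => by linarith [hq t]]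
  have hdisc : discrim A B (C - 1) ≤ 0 := discrim_le_zero fun t => by linarith [hq t]
  rw [discrim] at hdisc
  calc A / (C * √C) = 4 * A / (4 * C * √C) := by rw [mul_assoc 4, mul_div_mul_left _ _ four_ne_zero]
    _ ≤ (4 * A * C - B ^ 2) / (4 * C * √C) := by gcongr; linarith

lemma exists_eq_vecMulVec_of_rank_eq_one {m n K : Type*} [Fintype n] [DecidableEq n] [Field K]
    {Y : Matrix m n K} (h : Y.rank = 1) : ∃ (u : m → K) (v : n → K), Y = vecMulVec u v := by
  obtain ⟨w, -, hw⟩ := finrank_eq_one_iff'.mp h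
  have hcol : ∀ j, ∃ c : K, c • (w : m → K) = Y *ᵥ Pi.single j 1 := fun j => by
    obtain ⟨c, hc⟩ := hw ⟨Y *ᵥ Pi.single j 1, LinearMap.mem_range_self _ _⟩
    exact ⟨c, congrArg Subtype.val hc⟩
  choose v hv using hcol
  refine ⟨w, v, Matrix.ext fun i j => ?_⟩
  simpa [Matrix.mulVec_single, vecMulVec_apply, mul_comm] using (congrFun (hv j) i).symm

lemma hess_smul {n : ℕ} {f : Matrix (Fin n) (Fin 2) ℝ → ℝ} (hf : ContDiff ℝ 2 f)
    (X Z : Matrix (Fin n) (Fin 2) ℝ) (r : ℝ) :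
    hess f X (r • Z) = r ^ 2 * hess f X Z := by
  have hg : ContDiff ℝ 2 (fun t : ℝ => f (X + t • Z)) := by fun_prop
  have := congrFun (iteratedDeriv_comp_const_smul hg r) 0
  simp only [smul_eq_mul, mul_zero] at this
  simp only [hess, smul_smul, mul_comm _ r, this]

lemma transpose_vecMulVec_apply {m n α : Type*} [CommMagma α] (u : m → α) (v : n → α) (j : n) :
    (vecMulVec u v)ᵀ j = v j • u := by
  ext i; simp [vecMulVec_apply, mul_comm]

lemma norm_vecMulVec_sq {n : ℕ} (u : Fin n → ℝ) (v : Fin 2 → ℝ) :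
    ‖vecMulVec u v‖ ^ 2 = (v 0 ^ 2 + v 1 ^ 2) * (u ⬝ᵥ u) := by
  simp only [norm_sq_eq_dotProduct, transpose_vecMulVec_apply, smul_dotProduct, dotProduct_smul,
    smul_eq_mul]
  ring

lemma le_hess_Area_vecMulVec {n : ℕ} (X : Matrix (Fin n) (Fin 2) ℝ) (u : Fin n → ℝ)
    (v : Fin 2 → ℝ) : ‖vecMulVec u v‖ ^ 2 / Area X ^ 3 ≤ hess Area X (vecMulVec u v) := by
  obtain ⟨A, B, hA, hquad⟩ := areaForm_add_smul_eq_quadratic (Xᵀ 0) (Xᵀ 1) u (v 0) (v 1)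
  set C := areaForm (Xᵀ 0) (Xᵀ 1)
  have hC : 1 ≤ C := one_le_areaForm _ _
  have hline : (fun t : ℝ => Area (X + t • vecMulVec u v)) = fun t => √(A * t ^ 2 + B * t + C) :=
    funext fun t => by
      have hcol : ∀ j, (X + t • vecMulVec u v)ᵀ j = Xᵀ j + (t * v j) • u := fun j => by
        ext i; simp [vecMulVec_apply, mul_comm, mul_left_comm]
      rw [Area_eq_sqrt_areaForm, hcol, hcol, hquad]
  have hq : ∀ t : ℝ, 1 ≤ A * t ^ 2 + B * t + C := fun t => by
    rw [← hquad]; exact one_le_areaForm _ _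
  have hArea : Area X ^ 3 = C * √C := by
    rw [Area_eq_sqrt_areaForm, pow_succ, Real.sq_sqrt (by linarith)]
  rw [hess, hline, norm_vecMulVec_sq, hArea]
  calc _ ≤ A / (C * √C) := by gcongr
    _ ≤ _ := le_iteratedDeriv_two_sqrt_quadratic hq

lemma le_hess_Area_vecMulVec_of_norm_le {n : ℕ} {X : Matrix (Fin n) (Fin 2) ℝ} {M : ℝ}
    (hX : ‖X‖ ≤ M) (u : Fin n → ℝ) (v : Fin 2 → ℝ) :
    ‖vecMulVec u v‖ ^ 2 / (1 + M ^ 2) ^ 3 ≤ hess Area X (vecMulVec u v) := by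
  have hArea : Area X ≤ 1 + M ^ 2 := (Area_le_one_add_norm_sq X).trans (by gcongr)
  have hArea_pos : 0 < Area X := zero_lt_one.trans_le (one_le_Area X)
  calc _ ≤ ‖vecMulVec u v‖ ^ 2 / Area X ^ 3 := by gcongr
    _ ≤ _ := le_hess_Area_vecMulVec X u v

theorem perturbed_legendre_hadamard_general {n : ℕ} (R : ℝ) :
    ∃ ε' τ' : ℝ, 0 < ε' ∧ 0 < τ' ∧
      ∀ f : Matrix (Fin n) (Fin 2) ℝ → ℝ, ContDiff ℝ 2 f →
        (∀ X Z : Matrix (Fin n) (Fin 2) ℝ, frobNorm X ≤ 2 * R → frobNorm Z ≤ 1 →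
          |f X - Area X| + frobNorm (grad f X - grad Area X) +
              |hess f X Z - hess Area X Z| ≤ ε') →
        ∀ X Y : Matrix (Fin n) (Fin 2) ℝ, frobNorm X ≤ 3 * R / 2 → Y.rank = 1 →
          hess f X Y ≥ τ' * frobNorm Y ^ 2 := by
  set K := (1 + (3 * R / 2) ^ 2) ^ 3
  have hK : 1 / K = 2 * (1 / (2 * K)) := by field_simp
  refine ⟨1 / (2 * K), 1 / (2 * K), by positivity, by positivity, ?_⟩
  intro f hf hclose X Y hX hY
  obtain ⟨u, v, rfl⟩ := exists_eq_vecMulVec_of_rank_eq_one hY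
  simp only [frobNorm_eq_norm] at hclose hX ⊢
  have hr : 0 < ‖vecMulVec u v‖ := norm_pos_iff.2 fun h => by simp [h] at hY
  set Z := ‖vecMulVec u v‖⁻¹ • vecMulVec u v
  have hZ : ‖Z‖ = 1 := by simp [Z, norm_smul, hr.ne']
  have hAreaZ : 1 / K ≤ hess Area X Z := by
    have h := le_hess_Area_vecMulVec_of_norm_le hX (‖vecMulVec u v‖⁻¹ • u) v
    rwa [smul_vecMulVec, show ‖vecMulVec u v‖⁻¹ • vecMulVec u v = Z from rfl, hZ, one_pow] at h
  have hfZ : |hess f X Z - hess Area X Z| ≤ 1 / (2 * K) := by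
    have := hclose X Z (by linarith [norm_nonneg X]) hZ.le
    linarith [abs_nonneg (f X - Area X), norm_nonneg (grad f X - grad Area X)]
  calc hess f X (vecMulVec u v) = ‖vecMulVec u v‖ ^ 2 * hess f X Z := by
        rw [← hess_smul hf, smul_inv_smul₀ hr.ne']
    _ ≥ ‖vecMulVec u v‖ ^ 2 * (1 / (2 * K)) := by
        gcongr
        linarith [neg_abs_le (hess f X Z - hess Area X Z)]
    _ = _ := mul_comm _ _

/-- For every `R > 0` there exist `ε'(R) > 0` and `τ' = τ'(R) > 0` such that every `C²` function
`f` with `‖f − 𝒜‖_{C²(B_{2R})} ≤ ε'` satisfies `D²f(X)[Y,Y] ≥ τ'‖Y‖²` for all `X, Y` with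
`‖X‖ ≤ 3R/2` and `rank(Y) = 1`. -/
theorem perturbed_legendre_hadamard {n : ℕ} (hn : 1 ≤ n) (R : ℝ) (hR : 0 < R) :
    ∃ ε' τ' : ℝ, 0 < ε' ∧ 0 < τ' ∧
      ∀ f : Matrix (Fin n) (Fin 2) ℝ → ℝ, ContDiff ℝ 2 f →
        (∀ X Z : Matrix (Fin n) (Fin 2) ℝ, frobNorm X ≤ 2 * R → frobNorm Z ≤ 1 →
          |f X - Area X| + frobNorm (grad f X - grad Area X) +
              |hess f X Z - hess Area X Z| ≤ ε') →
        ∀ X Y : Matrix (Fin n) (Fin 2) ℝ, frobNorm X ≤ 3 * R / 2 → Y.rank = 1 →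
          hess f X Y ≥ τ' * frobNorm Y ^ 2 :=
  perturbed_legendre_hadamard_general R
end
end
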